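/- Define F : ℝ⁴ → ℝ⁴ by F(x¹,x²,x³,y) = ((x¹)² + (x²)² + (x³)² − y², 2x¹y, 2x²y, 2x³y) (the Hopf construction on the quaternions). Then for all (x¹,x²,x³,y) ∈ ℝ⁴: (i) |F(x¹,x²,x³,y)|² = ((x¹)²+(x²)²+(x³)²+y²)², so F maps S³ into S³; and (ii) |DF(x¹,x²,x³,y)|² = 8((x¹)² + (x²)² + (x³)²) + 16y². In particular, |DF|² is not constant on the unit sphere S³: it takes the value 8 at (1,0,0,0) and the value 16 at (0,0,0,1). -/

import Mathlib

/-!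
With `a = (x¹)² + (x²)² + (x³)²` and `b = y²`, part (i) is the identity `(a - b)² + 4ab = (a + b)²`.
For part (ii), `F` is quadratic, so its Jacobian matrix is linear in the point and can be written
down explicitly; `|DF|²` is then the sum of the squares of its entries.
-/

/-- Partial derivative of a map `ℝⁿ → ℝᵐ` in the `j`-th coordinate direction. -/
noncomputable def pd {n m : ℕ} (F : (Fin n → ℝ) → (Fin m → ℝ)) (j : Fin n)
    (x : Fin n → ℝ) : Fin m → ℝ :=
  fderiv ℝ F x (Pi.single j 1)

/-- Squared Frobenius norm of the total derivative of `F` at `x`. -/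
noncomputable def frobSq {n m : ℕ} (F : (Fin n → ℝ) → (Fin m → ℝ)) (x : Fin n → ℝ) : ℝ :=
  ∑ i, ∑ j, (pd F j x i) ^ 2

/-- The Hopf construction on the quaternions, as a quadratic map `ℝ⁴ → ℝ⁴`,
with coordinates `(x¹,x²,x³,y) = (x 0, x 1, x 2, x 3)`. -/
def hopfF : (Fin 4 → ℝ) → Fin 4 → ℝ := fun x =>
  ![(x 0) ^ 2 + (x 1) ^ 2 + (x 2) ^ 2 - (x 3) ^ 2,
    2 * x 0 * x 3, 2 * x 1 * x 3, 2 * x 2 * x 3]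

theorem frobSq_eq_of_hasFDerivAt {n m : ℕ} {F : (Fin n → ℝ) → (Fin m → ℝ)} {x : Fin n → ℝ}
    {J : Matrix (Fin m) (Fin n) ℝ} (hF : HasFDerivAt F (Matrix.toLin' J).toContinuousLinearMap x) :
    frobSq F x = ∑ i, ∑ j, J i j ^ 2 := by
  simp only [frobSq, pd, hF.fderiv, LinearMap.coe_toContinuousLinearMap', Matrix.toLin'_apply,
    Matrix.mulVec_single_one, Matrix.col_apply]

def hopfJacobian (x : Fin 4 → ℝ) : Matrix (Fin 4) (Fin 4) ℝ :=
  !![2 * x 0, 2 * x 1, 2 * x 2, -2 * x 3;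
     2 * x 3, 0, 0, 2 * x 0;
     0, 2 * x 3, 0, 2 * x 1;
     0, 0, 2 * x 3, 2 * x 2]

theorem hasFDerivAt_hopfF (x : Fin 4 → ℝ) :
    HasFDerivAt hopfF (Matrix.toLin' (hopfJacobian x)).toContinuousLinearMap x := by
  have h (a : Fin 4) := hasFDerivAt_apply (𝕜 := ℝ) (F' := fun _ : Fin 4 => ℝ) a x
  refine hasFDerivAt_pi'.2 fun i => ?_
  fin_cases i <;> [
    refine (((((h 0).pow 2).add ((h 1).pow 2)).add ((h 2).pow 2)).sub ((h 3).pow 2)).congr_fderiv ?_;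
    refine (((h 0).const_mul 2).mul (h 3)).congr_fderiv ?_;
    refine (((h 1).const_mul 2).mul (h 3)).congr_fderiv ?_;
    refine (((h 2).const_mul 2).mul (h 3)).congr_fderiv ?_] <;>
  · ext v
    simp only [ContinuousLinearMap.comp_apply, LinearMap.coe_toContinuousLinearMap',
      Matrix.toLin'_apply, Matrix.mulVec, dotProduct, Fin.sum_univ_four, hopfJacobian,
      Matrix.of_apply, Matrix.cons_val, add_apply, sub_apply, smul_apply,
      ContinuousLinearMap.proj_apply, smul_eq_mul, Fin.zero_eta, Fin.mk_one, Fin.reduceFinMk]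
    ring

theorem sum_sq_hopfF (x : Fin 4 → ℝ) :
    ∑ i, hopfF x i ^ 2 = (x 0 ^ 2 + x 1 ^ 2 + x 2 ^ 2 + x 3 ^ 2) ^ 2 := by
  simp only [hopfF, Fin.sum_univ_four, Matrix.cons_val]
  ring

theorem frobSq_hopfF (x : Fin 4 → ℝ) :
    frobSq hopfF x = 8 * (x 0 ^ 2 + x 1 ^ 2 + x 2 ^ 2) + 16 * x 3 ^ 2 := by
  rw [frobSq_eq_of_hasFDerivAt (hasFDerivAt_hopfF x)]
  simp only [hopfJacobian, Fin.sum_univ_four, Matrix.of_apply, Matrix.cons_val]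
  ring

theorem stmt17 :
    (∀ x : Fin 4 → ℝ,
      ∑ i, (hopfF x i) ^ 2 = ((x 0) ^ 2 + (x 1) ^ 2 + (x 2) ^ 2 + (x 3) ^ 2) ^ 2) ∧
    (∀ x : Fin 4 → ℝ,
      frobSq hopfF x = 8 * ((x 0) ^ 2 + (x 1) ^ 2 + (x 2) ^ 2) + 16 * (x 3) ^ 2) ∧
    frobSq hopfF ![1, 0, 0, 0] = 8 ∧ frobSq hopfF ![0, 0, 0, 1] = 16 := by
  refine ⟨sum_sq_hopfF, frobSq_hopfF, ?_, ?_⟩ <;> simp [frobSq_hopfF]
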